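/- arXiv:quant-ph/0504083 — 5 statements merged into one kernel-verified Lean document; each statement's English description precedes it below -/
import Mathlib

section
/- Let G = A ⋊_φ Z_p with p prime, H = ⟨H₁, (a,1)⟩ where H₁ = A₁ × {0} is normal in G and A₁ ≤ A. Then ⟨(a,1)⟩ ∩ H₁ = ⟨(Φ_p(a), 0)⟩, and H/H₁ is a cyclic group of order dividing p; in particular if H₁ ≠ H then H/H₁ is cyclic of order p generated by the coset of (a,1). -/
private theorem pow_lem {A : Type*} [CommGroup A] {p : ℕ} [Fact p.Prime]
    (φ : Multiplicative (ZMod p) →* MulAut A) (a : A) (n : ℕ) :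
    (⟨a, Multiplicative.ofAdd (1 : ZMod p)⟩ : A ⋊[φ] Multiplicative (ZMod p)) ^ n
      = ⟨∏ i ∈ Finset.range n, (φ (Multiplicative.ofAdd (1 : ZMod p)) ^ i) a,
          Multiplicative.ofAdd (n : ZMod p)⟩ := by
  induction n with
  | zero => simp
  | succ n ih =>
      rw [pow_succ, ih, Finset.prod_range_succ]
      ext
      · simp only [SemidirectProduct.mul_left]
        congr 1
        have : (Multiplicative.ofAdd ((n : ZMod p))) = (Multiplicative.ofAdd (1 : ZMod p)) ^ n := by
          simp [← ofAdd_nsmul]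
        rw [this, map_pow]
      · simp only [SemidirectProduct.mul_right, ← ofAdd_add]
        push_cast
        ring_nf

/-- Let `G = A ⋊[φ] Z_p` with `p` prime, `H₁ = H ∩ (A × {0})` normal in `G`,
`(a,1) ∈ H`, and `H = ⟨H₁, (a,1)⟩`.  Then `⟨(a,1)⟩ ∩ H₁ = ⟨(Φ_p(a),0)⟩` where
`Φ_p(a) = Σ_{i<p} φ^i(a)` (written multiplicatively), the quotient `H/H₁` is cyclic
of order dividing `p`, and if `H₁ ≠ H` it is cyclic of order `p` generated by the
coset of `(a,1)`. -/
theorem stmt_5 {A : Type*} [CommGroup A] {p : ℕ} [Fact p.Prime]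
    (φ : Multiplicative (ZMod p) →* MulAut A)
    (H : Subgroup (A ⋊[φ] Multiplicative (ZMod p))) (a : A)
    (ha : (⟨a, Multiplicative.ofAdd (1 : ZMod p)⟩ : A ⋊[φ] Multiplicative (ZMod p)) ∈ H)
    (hH : H = Subgroup.map SemidirectProduct.inl
            (H.comap (SemidirectProduct.inl : A →* A ⋊[φ] Multiplicative (ZMod p)))
          ⊔ Subgroup.closure {(⟨a, Multiplicative.ofAdd (1 : ZMod p)⟩ :
            A ⋊[φ] Multiplicative (ZMod p))})
    (hnorm : (Subgroup.map (SemidirectProduct.inl : A →* A ⋊[φ] Multiplicative (ZMod p))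
        (H.comap (SemidirectProduct.inl : A →* A ⋊[φ] Multiplicative (ZMod p)))).Normal) :
    Subgroup.closure {(⟨a, Multiplicative.ofAdd (1 : ZMod p)⟩ :
            A ⋊[φ] Multiplicative (ZMod p))}
        ⊓ Subgroup.map SemidirectProduct.inl
            (H.comap (SemidirectProduct.inl : A →* A ⋊[φ] Multiplicative (ZMod p)))
      = Subgroup.closure {SemidirectProduct.inl
          (∏ i ∈ Finset.range p, (φ (Multiplicative.ofAdd (1 : ZMod p)) ^ i) a)}
    ∧ (Subgroup.map SemidirectProduct.inl
        (H.comap (SemidirectProduct.inl : A →* A ⋊[φ] Multiplicative (ZMod p)))).relIndex H ∣ p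
    ∧ (Subgroup.map SemidirectProduct.inl
          (H.comap (SemidirectProduct.inl : A →* A ⋊[φ] Multiplicative (ZMod p))) ≠ H →
        (Subgroup.map SemidirectProduct.inl
          (H.comap (SemidirectProduct.inl : A →* A ⋊[φ] Multiplicative (ZMod p)))).relIndex H = p
        ∧ ∀ h ∈ H, ∃ b : ℕ, ∃ h₁ ∈ Subgroup.map SemidirectProduct.inl
            (H.comap (SemidirectProduct.inl : A →* A ⋊[φ] Multiplicative (ZMod p))),
            h = (⟨a, Multiplicative.ofAdd (1 : ZMod p)⟩ :
                  A ⋊[φ] Multiplicative (ZMod p)) ^ b * h₁) := by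
  have hp : p.Prime := Fact.out
  set g : A ⋊[φ] Multiplicative (ZMod p) := ⟨a, Multiplicative.ofAdd (1 : ZMod p)⟩ with hg
  set K := Subgroup.map (SemidirectProduct.inl : A →* A ⋊[φ] Multiplicative (ZMod p))
      (H.comap (SemidirectProduct.inl : A →* A ⋊[φ] Multiplicative (ZMod p))) with hK
  -- g^p = inl Φ
  have hgp : g ^ p = SemidirectProduct.inl
      (∏ i ∈ Finset.range p, (φ (Multiplicative.ofAdd (1 : ZMod p)) ^ i) a) := by
    rw [hg, pow_lem]
    ext
    · rfl
    · show Multiplicative.ofAdd ((p : ZMod p)) = 1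
      rw [ZMod.natCast_self]
      rfl
  have hKH : K ≤ H := by
    rintro x ⟨y, hy, rfl⟩
    exact hy
  have hgpK : g ^ p ∈ K := by
    have hmem : SemidirectProduct.inl
        (∏ i ∈ Finset.range p, (φ (Multiplicative.ofAdd (1 : ZMod p)) ^ i) a) ∈ H := by
      rw [← hgp]; exact pow_mem ha p
    rw [hgp]
    exact ⟨_, hmem, rfl⟩
  -- right component of zpowers
  have hright : ∀ n : ℤ, (g ^ n).right = Multiplicative.ofAdd ((n : ZMod p)) := by
    intro n
    have : (g ^ n).right = (SemidirectProduct.rightHom (g ^ n)) := rfl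
    rw [this, map_zpow]
    show (Multiplicative.ofAdd (1 : ZMod p)) ^ n = _
    rw [← ofAdd_zsmul]
    congr 1
    simp
  -- decomposition of elements of H
  have hdecomp : ∀ h ∈ H, ∃ b : ℕ, ∃ h₁ ∈ K, h = g ^ b * h₁ := by
    intro h hh
    haveI : K.Normal := hnorm
    rw [hH, sup_comm, ← SetLike.mem_coe, Subgroup.mul_normal _ K] at hh
    obtain ⟨c, hc, k, hk, rfl⟩ := hh
    obtain ⟨n, rfl⟩ := Subgroup.mem_closure_singleton.mp hc
    have hp0 : (p : ℤ) ≠ 0 := by exact_mod_cast hp.ne_zero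
    refine ⟨(n % p).toNat, (g ^ p) ^ (n / p) * k, mul_mem (zpow_mem hgpK _) hk, ?_⟩
    rw [← mul_assoc]
    congr 1
    rw [← zpow_natCast, Int.toNat_of_nonneg (Int.emod_nonneg n hp0),
      ← zpow_natCast g p, ← zpow_mul, ← zpow_add]
    congr 1
    exact (Int.emod_add_mul_ediv n p).symm
  -- first conjunct
  have part1 : Subgroup.closure {g} ⊓ K = Subgroup.closure {SemidirectProduct.inl
      (∏ i ∈ Finset.range p, (φ (Multiplicative.ofAdd (1 : ZMod p)) ^ i) a)} := by
    apply le_antisymm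
    · rintro x ⟨hx1, hx2⟩
      obtain ⟨n, rfl⟩ := Subgroup.mem_closure_singleton.mp hx1
      have hr : (g ^ n).right = 1 := by
        obtain ⟨y, -, hy⟩ := hx2
        rw [← hy]
        rfl
      rw [hright] at hr
      have : (n : ZMod p) = 0 := by
        have := congrArg Multiplicative.toAdd hr
        simpa using this
      obtain ⟨m, rfl⟩ := (ZMod.intCast_zmod_eq_zero_iff_dvd n p).mp this
      rw [Subgroup.mem_closure_singleton]
      exact ⟨m, by rw [← hgp, ← zpow_natCast g, ← zpow_mul]⟩
    · rw [Subgroup.closure_le, Set.singleton_subset_iff]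
      exact ⟨by rw [← hgp]; exact pow_mem (Subgroup.mem_closure_singleton_self g) p,
        by rw [← hgp]; exact hgpK⟩
  -- the quotient
  haveI hnormK : (K.subgroupOf H).Normal := hnorm.subgroupOf H
  set gH : H := ⟨g, ha⟩ with hgH
  set gbar : H ⧸ K.subgroupOf H := QuotientGroup.mk gH with hgbar
  have hbar1 : gbar ^ p = 1 := by
    rw [hgbar, ← QuotientGroup.mk_pow, QuotientGroup.eq_one_iff]
    show (gH ^ p : A ⋊[φ] Multiplicative (ZMod p)) ∈ K
    exact hgpK
  have htop : Subgroup.zpowers gbar = ⊤ := by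
    rw [Subgroup.eq_top_iff']
    intro q
    induction q using QuotientGroup.induction_on with
    | H h =>
      obtain ⟨b, h₁, hh₁, heq⟩ := hdecomp h h.2
      have : (h : A ⋊[φ] Multiplicative (ZMod p)) = ((gH ^ b * ⟨h₁, hKH hh₁⟩ : H) :
          A ⋊[φ] Multiplicative (ZMod p)) := heq
      have hh : h = gH ^ b * ⟨h₁, hKH hh₁⟩ := Subtype.ext this
      rw [hh, QuotientGroup.mk_mul, QuotientGroup.mk_pow]
      have : (QuotientGroup.mk (⟨h₁, hKH hh₁⟩ : H) : H ⧸ K.subgroupOf H) = 1 :=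
        (QuotientGroup.eq_one_iff _).mpr hh₁
      rw [this, mul_one]
      refine ⟨(b : ℤ), ?_⟩
      show gbar ^ (b : ℤ) = _
      rw [zpow_natCast, hgbar]
  have hcard : Nat.card (H ⧸ K.subgroupOf H) = orderOf gbar := by
    rw [← Nat.card_zpowers, htop]
    exact (Nat.card_congr Subgroup.topEquiv.toEquiv).symm
  have hrel : K.relIndex H = Nat.card (H ⧸ K.subgroupOf H) := rfl
  have part2 : K.relIndex H ∣ p := by
    rw [hrel, hcard]
    exact orderOf_dvd_of_pow_eq_one hbar1
  refine ⟨part1, part2, fun hne => ⟨?_, hdecomp⟩⟩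
  rcases (Nat.Prime.eq_one_or_self_of_dvd hp _ part2) with h1 | h1
  · exfalso
    exact hne (le_antisymm hKH (Subgroup.relIndex_eq_one.mp h1))
  · exact h1
end

section
/- Let N ∈ ℕ, p prime, μ ∈ (Z_N)^× with μ ≠ 1 and μ^p = 1 in Z_N, and M_b := Σ_{i=0}^{b-1} μ^i. Then the map b ↦ M_b is injective on Z_p, i.e., for b, b' ∈ {0,1,...,p-1} with b ≠ b', M_b ≠ M_{b'} in Z_N. -/
/-!
If `M_b = M_{b'}` with `b < b'`, then `μ ^ b * M_{b' - b} = 0`; cancelling `μ ^ b` (a unit,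
since `μ` has finite order) gives `M_{b' - b} = 0`, and multiplying by `μ - 1` gives
`μ ^ (b' - b) = 1`, which is impossible for `0 < b' - b < orderOf μ`.
-/

open Finset

variable {R : Type*} [Ring R]

theorem pow_eq_one_of_geom_sum_eq_zero {μ : R} {k : ℕ} (h : ∑ i ∈ range k, μ ^ i = 0) :
    μ ^ k = 1 := by
  have := geom_sum_mul μ k
  rwa [h, zero_mul, eq_comm, sub_eq_zero] at this

theorem geom_sum_range_add (μ : R) (b k : ℕ) :
    ∑ i ∈ range (b + k), μ ^ i = ∑ i ∈ range b, μ ^ i + μ ^ b * ∑ i ∈ range k, μ ^ i := by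
  simp only [sum_range_add, pow_add, mul_sum]

theorem geom_sum_injOn_Iio_orderOf (μ : R) :
    Set.InjOn (fun b ↦ ∑ i ∈ range b, μ ^ i) (Set.Iio (orderOf μ)) := by
  suffices key : ∀ b k, 0 < k → b + k < orderOf μ →
      ∑ i ∈ range b, μ ^ i ≠ ∑ i ∈ range (b + k), μ ^ i by
    intro b hb b' hb' heq
    rcases lt_trichotomy b b' with hlt | rfl | hgt
    · obtain ⟨k, rfl⟩ := Nat.exists_eq_add_of_lt hlt
      exact absurd heq (key b (k + 1) k.succ_pos hb')
    · rfl
    · obtain ⟨k, rfl⟩ := Nat.exists_eq_add_of_lt hgt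
      exact absurd heq.symm (key b' (k + 1) k.succ_pos hb)
  intro b k hk hbk heq
  have hunit : IsUnit (μ ^ b) :=
    (orderOf_pos_iff.mp (by omega)).isUnit.pow b
  have hsum : ∑ i ∈ range k, μ ^ i = 0 := by
    rw [geom_sum_range_add, left_eq_add] at heq
    exact hunit.mul_right_eq_zero.mp heq
  have := orderOf_le_of_pow_eq_one hk (pow_eq_one_of_geom_sum_eq_zero hsum)
  omega

theorem stmt_8_general {N p : ℕ} (hp : p.Prime) (μ : ZMod N)
    (hμ1 : μ ≠ 1) (hord : μ ^ p = 1)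
    (b b' : ℕ) (hb : b < p) (hb' : b' < p) (hne : b ≠ b') :
    ∑ i ∈ Finset.range b, μ ^ i ≠ ∑ i ∈ Finset.range b', μ ^ i := by
  have : Fact p.Prime := ⟨hp⟩
  have hμp : orderOf μ = p := orderOf_eq_prime hord hμ1
  exact (geom_sum_injOn_Iio_orderOf μ).ne (hμp ▸ hb) (hμp ▸ hb') hne

/-- If `μ` is a unit of `Z_N` of order exactly `p` (prime), then the geometric sums
`M_b = Σ_{i<b} μ^i` for `b ∈ {0,…,p-1}` are pairwise distinct. -/
theorem stmt_8 {N p : ℕ} (hp : p.Prime) (μ : ZMod N) (hμ : IsUnit μ)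
    (hμ1 : μ ≠ 1) (hord : μ ^ p = 1)
    (b b' : ℕ) (hb : b < p) (hb' : b' < p) (hne : b ≠ b') :
    ∑ i ∈ Finset.range b, μ ^ i ≠ ∑ i ∈ Finset.range b', μ ^ i :=
  stmt_8_general hp μ hμ1 hord b b' hb hb' hne
end

section
/- Let A be a finite abelian group, p prime, k ∈ ℕ, and η^x_w nonnegative integers indexed by x ∈ A^k, w ∈ A with Σ_w η^x_w = p^k for all x. Suppose Pr_{x,w}(η^x_w ≥ α) ≥ β for uniformly random x ∈ A^k, w ∈ A and some α > 0, β ∈ [0,1]. Then P = (p/|G|^{k+1}) Σ_{x ∈ A^k} (Σ_{w ∈ A} √(η^x_w))², where |G| = |A| p, satisfies P ≥ α β² |A| / p^k. -/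
/-- Lower bound on the PGM success probability: if `Σ_w η^x_w = p^k` for every `x`, and
`Pr_{x,w}(η^x_w ≥ α) ≥ β` for uniformly random `x ∈ A^k`, `w ∈ A`, then
`P = p/|G|^{k+1} · Σ_x (Σ_w √(η^x_w))² ≥ α β² |A|/p^k`, where `|G| = |A|·p`. -/
theorem stmt_12 {A : Type*} [AddCommGroup A] [Fintype A]
    {p : ℕ} (hp : p.Prime) (k : ℕ)
    (η : (Fin k → A) → A → ℕ)
    (hη : ∀ x, ∑ w : A, η x w = p ^ k)
    (α β : ℝ) (hα : 0 < α) (hβ0 : 0 ≤ β) (hβ1 : β ≤ 1)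
    (hprob : β ≤ ((Finset.univ.filter
          fun xw : (Fin k → A) × A => α ≤ (η xw.1 xw.2 : ℝ)).card : ℝ)
        / ((Fintype.card A : ℝ) ^ k * (Fintype.card A : ℝ))) :
    α * β ^ 2 * (Fintype.card A : ℝ) / (p : ℝ) ^ k
      ≤ (p : ℝ) / ((Fintype.card A : ℝ) * (p : ℝ)) ^ (k + 1)
          * ∑ x : Fin k → A, (∑ w : A, Real.sqrt (η x w)) ^ 2 := by
  set N : ℝ := (Fintype.card A : ℝ) with hN
  have hNpos : 0 < N := by
    have := Fintype.card_pos (α := A); rw [hN]; exact_mod_cast this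
  have hppos : (0 : ℝ) < p := by exact_mod_cast hp.pos
  set F := Finset.univ.filter fun xw : (Fin k → A) × A => α ≤ (η xw.1 xw.2 : ℝ) with hF
  set S : ℝ := ∑ x : Fin k → A, (∑ w : A, Real.sqrt (η x w)) ^ 2 with hS
  set T : ℝ := ∑ x : Fin k → A, ∑ w : A, Real.sqrt (η x w) with hT
  -- card bound
  have hcard : β * (N ^ k * N) ≤ (F.card : ℝ) := by
    have hD : (0 : ℝ) < N ^ k * N := by positivity
    exact (le_div_iff₀ hD).mp hprob
  -- T lower bound
  have hT1 : (F.card : ℝ) * Real.sqrt α ≤ T := by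
    have h1 : ∑ xw ∈ F, Real.sqrt α ≤ ∑ xw ∈ F, Real.sqrt ((η xw.1 xw.2 : ℝ)) :=
      Finset.sum_le_sum fun xw hxw =>
        Real.sqrt_le_sqrt (Finset.mem_filter.mp hxw).2
    have h2 : ∑ xw ∈ F, Real.sqrt ((η xw.1 xw.2 : ℝ))
        ≤ ∑ xw : (Fin k → A) × A, Real.sqrt ((η xw.1 xw.2 : ℝ)) :=
      Finset.sum_le_sum_of_subset_of_nonneg (Finset.filter_subset _ _)
        fun _ _ _ => Real.sqrt_nonneg _
    have h3 : ∑ xw : (Fin k → A) × A, Real.sqrt ((η xw.1 xw.2 : ℝ)) = T := by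
      rw [hT, Fintype.sum_prod_type]
    calc (F.card : ℝ) * Real.sqrt α = ∑ _xw ∈ F, Real.sqrt α := by
          simp [mul_comm]
      _ ≤ T := le_trans h1 (h2.trans_eq h3)
  have hT0 : 0 ≤ T := Finset.sum_nonneg fun _ _ =>
    Finset.sum_nonneg fun _ _ => Real.sqrt_nonneg _
  -- Cauchy–Schwarz
  have hCS : T ^ 2 ≤ N ^ k * S := by
    have := sq_sum_le_card_mul_sum_sq (s := (Finset.univ : Finset (Fin k → A)))
      (f := fun x => ∑ w : A, Real.sqrt (η x w))
    have hc : ((Finset.univ : Finset (Fin k → A)).card : ℝ) = N ^ k := by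
      rw [hN]; norm_num [Fintype.card_fun]
    calc T ^ 2 ≤ ((Finset.univ : Finset (Fin k → A)).card : ℝ) * S := by
          exact_mod_cast this
      _ = N ^ k * S := by rw [hc]
  -- lower bound on T^2
  have hlow : β * (N ^ k * N) * Real.sqrt α ≤ T := by
    calc β * (N ^ k * N) * Real.sqrt α ≤ (F.card : ℝ) * Real.sqrt α := by
          exact mul_le_mul_of_nonneg_right hcard (Real.sqrt_nonneg _)
      _ ≤ T := hT1
  have hlow0 : 0 ≤ β * (N ^ k * N) * Real.sqrt α := by positivity
  have hT2 : (β * (N ^ k * N) * Real.sqrt α) ^ 2 ≤ T ^ 2 := by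
    exact pow_le_pow_left₀ hlow0 hlow 2
  have hsq : (β * (N ^ k * N) * Real.sqrt α) ^ 2 = α * β ^ 2 * (N ^ k * N) ^ 2 := by
    have : Real.sqrt α ^ 2 = α := Real.sq_sqrt hα.le
    rw [mul_pow, mul_pow, this]; ring
  have hSlow : α * β ^ 2 * N ^ (k + 2) ≤ S := by
    have h4 : α * β ^ 2 * (N ^ k * N) ^ 2 ≤ N ^ k * S := by
      rw [← hsq]; exact hT2.trans hCS
    have hNk : (0 : ℝ) < N ^ k := by positivity
    rw [← mul_le_mul_iff_right₀ hNk]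
    calc N ^ k * (α * β ^ 2 * N ^ (k + 2)) = α * β ^ 2 * (N ^ k * N) ^ 2 := by ring
      _ ≤ N ^ k * S := h4
  -- final arithmetic
  have hkey : (p : ℝ) / (N * p) ^ (k + 1) * (α * β ^ 2 * N ^ (k + 2))
      = α * β ^ 2 * N / (p : ℝ) ^ k := by
    field_simp
    ring
  calc α * β ^ 2 * N / (p : ℝ) ^ k
      = (p : ℝ) / (N * p) ^ (k + 1) * (α * β ^ 2 * N ^ (k + 2)) := hkey.symm
    _ ≤ (p : ℝ) / (N * p) ^ (k + 1) * S := by gcongr <;> positivity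
end

section
/- Let p be an odd prime, x₁,x₂,y₁,y₂,w,v ∈ Z_p with y₁, y₂, y₁+y₂ all nonzero, and set Δ := (2wy₁ + vy₁ − v² − 2vx₁)(y₁+y₂)y₂ + (vy₂ + x₁y₂ − x₂y₁)². If Δ is a nonzero square in Z_p, say Δ = δ² with δ ≠ 0, then b₁ = (vy₁ + x₂y₁ − x₁y₂ + δ)/(y₁(y₁+y₂)) and b₂ = (vy₂ + x₁y₂ − x₂y₁ − δ)/(y₂(y₁+y₂)) satisfy the system b₁x₁ + s b₁(1−b₁)y₁ + b₂x₂ + s b₂(1−b₂)y₂ = w and b₁y₁ + b₂y₂ = v, where s is the inverse of −2 in Z_p. -/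
/-!
Writing `uᵢ = bᵢ yᵢ`, the second equation says `u₁ + u₂ = v`, and the first one, multiplied by
`-2 y₁ y₂ = y₁ y₂ / s`, becomes a quadratic equation in `(u₁, u₂)` with polynomial coefficients.
On the line `u₁ + u₂ = v` it is a quadratic in `u₁` with leading coefficient `-(y₁ + y₂)` and
reduced discriminant `Δ`, whose roots are `(v y₁ + x₂ y₁ - x₁ y₂ ± δ) / (y₁ + y₂)`.
-/

section

variable {K : Type*} [Field K]

def clearedFirstEq (x₁ x₂ y₁ y₂ w u₁ u₂ : K) : K :=
  y₂ * u₁ * (y₁ - u₁) + y₁ * u₂ * (y₂ - u₂) - 2 * x₁ * y₂ * u₁ - 2 * x₂ * y₁ * u₂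
    + 2 * w * y₁ * y₂

theorem clearedFirstEq_mul_of_mul_eq (x₁ x₂ y₁ y₂ w v δ u₁ u₂ : K)
    (hu₁ : (y₁ + y₂) * u₁ = v * y₁ + x₂ * y₁ - x₁ * y₂ + δ)
    (hu₂ : (y₁ + y₂) * u₂ = v * y₂ + x₁ * y₂ - x₂ * y₁ - δ) :
    (y₁ + y₂) ^ 2 * clearedFirstEq x₁ x₂ y₁ y₂ w u₁ u₂ =
      (y₁ + y₂) * ((2 * w * y₁ + v * y₁ - v ^ 2 - 2 * v * x₁) * (y₁ + y₂) * y₂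
        + (v * y₂ + x₁ * y₂ - x₂ * y₁) ^ 2 - δ ^ 2) := by
  unfold clearedFirstEq
  linear_combination
    (y₂ * ((y₁ + y₂) * y₁ - (y₁ + y₂) * u₁ - (v * y₁ + x₂ * y₁ - x₁ * y₂ + δ))
      - 2 * x₁ * y₂ * (y₁ + y₂)) * hu₁
    + (y₁ * ((y₁ + y₂) * y₂ - (y₁ + y₂) * u₂ - (v * y₂ + x₁ * y₂ - x₂ * y₁ - δ))
      - 2 * x₂ * y₁ * (y₁ + y₂)) * hu₂

theorem clearedFirstEq_mul_mul {s : K} (hs : -2 * s = 1) (x₁ x₂ y₁ y₂ w b₁ b₂ : K) :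
    clearedFirstEq x₁ x₂ y₁ y₂ w (b₁ * y₁) (b₂ * y₂) =
      -2 * y₁ * y₂ *
        (b₁ * x₁ + s * b₁ * (1 - b₁) * y₁ + b₂ * x₂ + s * b₂ * (1 - b₂) * y₂ - w) := by
  unfold clearedFirstEq
  linear_combination (-(b₁ * (1 - b₁) * y₁ ^ 2 * y₂) - b₂ * (1 - b₂) * y₁ * y₂ ^ 2) * hs

theorem heisenberg_system_solution {s : K} (hs : -2 * s = 1) {x₁ x₂ y₁ y₂ w v δ : K}
    (hy₁ : y₁ ≠ 0) (hy₂ : y₂ ≠ 0) (hy₁₂ : y₁ + y₂ ≠ 0)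
    (hΔ : δ ^ 2 = (2 * w * y₁ + v * y₁ - v ^ 2 - 2 * v * x₁) * (y₁ + y₂) * y₂
                 + (v * y₂ + x₁ * y₂ - x₂ * y₁) ^ 2) :
    let b₁ := (v * y₁ + x₂ * y₁ - x₁ * y₂ + δ) / (y₁ * (y₁ + y₂))
    let b₂ := (v * y₂ + x₁ * y₂ - x₂ * y₁ - δ) / (y₂ * (y₁ + y₂))
    b₁ * x₁ + s * b₁ * (1 - b₁) * y₁ + b₂ * x₂ + s * b₂ * (1 - b₂) * y₂ = w
    ∧ b₁ * y₁ + b₂ * y₂ = v := by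
  intro b₁ b₂
  have hu₁ : (y₁ + y₂) * (b₁ * y₁) = v * y₁ + x₂ * y₁ - x₁ * y₂ + δ := by
    simp only [b₁]; field_simp
  have hu₂ : (y₁ + y₂) * (b₂ * y₂) = v * y₂ + x₁ * y₂ - x₂ * y₁ - δ := by
    simp only [b₂]; field_simp
  have hcleared : clearedFirstEq x₁ x₂ y₁ y₂ w (b₁ * y₁) (b₂ * y₂) = 0 := by
    have h := clearedFirstEq_mul_of_mul_eq x₁ x₂ y₁ y₂ w v δ _ _ hu₁ hu₂
    rw [← hΔ, sub_self, mul_zero] at h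
    exact (mul_eq_zero.mp h).resolve_left (pow_ne_zero 2 hy₁₂)
  rw [clearedFirstEq_mul_mul hs] at hcleared
  have hy : -2 * y₁ * y₂ ≠ 0 := by
    refine mul_ne_zero (mul_ne_zero ?_ hy₁) hy₂
    exact left_ne_zero_of_mul_eq_one hs
  constructor
  · exact sub_eq_zero.mp ((mul_eq_zero.mp hcleared).resolve_left hy)
  · exact mul_left_cancel₀ hy₁₂ (by linear_combination hu₁ + hu₂)

end

theorem stmt_14_general {p : ℕ} [Fact p.Prime]
    (s : ZMod p) (hs : (-2 : ZMod p) * s = 1)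
    (x₁ x₂ y₁ y₂ w v : ZMod p)
    (hy₁ : y₁ ≠ 0) (hy₂ : y₂ ≠ 0) (hy₁₂ : y₁ + y₂ ≠ 0)
    (δ : ZMod p)
    (hΔ : δ ^ 2 = (2 * w * y₁ + v * y₁ - v ^ 2 - 2 * v * x₁) * (y₁ + y₂) * y₂
                 + (v * y₂ + x₁ * y₂ - x₂ * y₁) ^ 2) :
    let b₁ := (v * y₁ + x₂ * y₁ - x₁ * y₂ + δ) / (y₁ * (y₁ + y₂))
    let b₂ := (v * y₂ + x₁ * y₂ - x₂ * y₁ - δ) / (y₂ * (y₁ + y₂))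
    b₁ * x₁ + s * b₁ * (1 - b₁) * y₁ + b₂ * x₂ + s * b₂ * (1 - b₂) * y₂ = w
    ∧ b₁ * y₁ + b₂ * y₂ = v :=
  heisenberg_system_solution hs hy₁ hy₂ hy₁₂ hΔ

/-- Explicit solution of the matrix sum problem for the Heisenberg group with `k = 2`:
if `y₁, y₂, y₁+y₂ ≠ 0` and the discriminant `Δ = δ²` is a nonzero square, then the
displayed `b₁, b₂` solve the system. -/
theorem stmt_14 {p : ℕ} [Fact p.Prime] (hodd : p ≠ 2)
    (s : ZMod p) (hs : (-2 : ZMod p) * s = 1)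
    (x₁ x₂ y₁ y₂ w v : ZMod p)
    (hy₁ : y₁ ≠ 0) (hy₂ : y₂ ≠ 0) (hy₁₂ : y₁ + y₂ ≠ 0)
    (δ : ZMod p) (hδ : δ ≠ 0)
    (hΔ : δ ^ 2 = (2 * w * y₁ + v * y₁ - v ^ 2 - 2 * v * x₁) * (y₁ + y₂) * y₂
                 + (v * y₂ + x₁ * y₂ - x₂ * y₁) ^ 2) :
    let b₁ := (v * y₁ + x₂ * y₁ - x₁ * y₂ + δ) / (y₁ * (y₁ + y₂))
    let b₂ := (v * y₂ + x₁ * y₂ - x₂ * y₁ - δ) / (y₂ * (y₁ + y₂))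
    b₁ * x₁ + s * b₁ * (1 - b₁) * y₁ + b₂ * x₂ + s * b₂ * (1 - b₂) * y₂ = w
    ∧ b₁ * y₁ + b₂ * y₂ = v :=
  stmt_14_general s hs x₁ x₂ y₁ y₂ w v hy₁ hy₂ hy₁₂ δ hΔ
end

section
/- Let p be an odd prime and s = (−2)⁻¹ in Z_p. Fix x₁,x₂,y₁,y₂,v ∈ Z_p with y₁, y₂, y₁+y₂ nonzero, and for w ∈ Z_p let η(w) denote the number of pairs (b₁,b₂) ∈ Z_p² solving b₁x₁ + s b₁(1−b₁)y₁ + b₂x₂ + s b₂(1−b₂)y₂ = w and b₁y₁ + b₂y₂ = v. Then as w ranges over Z_p, exactly (p−1)/2 values of w give η(w) = 0, exactly one value gives η(w) = 1, and exactly (p−1)/2 values give η(w) = 2. -/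
section Aux

variable {p : ℕ} [Fact p.Prime]

lemma aux_sq_card_zero : Fintype.card {t : ZMod p // t ^ 2 = 0} = 1 := by
  rw [Fintype.card_subtype]
  have : (Finset.univ.filter fun t : ZMod p => t ^ 2 = 0) = {0} := by
    ext t; simp [pow_eq_zero_iff]
  rw [this, Finset.card_singleton]

lemma aux_sq_card_ne (h2 : (2 : ZMod p) ≠ 0) {d : ZMod p} (hd : d ≠ 0) :
    Fintype.card {t : ZMod p // t ^ 2 = d} = 0 ∨
    Fintype.card {t : ZMod p // t ^ 2 = d} = 2 := by
  rw [Fintype.card_subtype]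
  by_cases h : ∃ r : ZMod p, r ^ 2 = d
  · obtain ⟨r, hr⟩ := h
    have hr0 : r ≠ 0 := by rintro rfl; exact hd (by simpa using hr.symm)
    right
    have hset : (Finset.univ.filter fun t : ZMod p => t ^ 2 = d) = {r, -r} := by
      ext t
      simp only [Finset.mem_filter, Finset.mem_univ, true_and, Finset.mem_insert,
        Finset.mem_singleton]
      constructor
      · intro ht
        have : t * t = r * r := by rw [← sq, ← sq, ht, hr]
        exact mul_self_eq_mul_self_iff.mp this
      · rintro (rfl | rfl)
        · exact hr
        · rw [← hr]; ring
    rw [hset, Finset.card_pair]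
    intro he
    apply hr0
    have h2r : 2 * r = 0 := by linear_combination he
    rcases mul_eq_zero.mp h2r with h' | h'
    · exact absurd h' h2
    · exact h'
  · left
    rw [Finset.card_eq_zero, Finset.filter_eq_empty_iff]
    intro t _
    exact fun ht => h ⟨t, ht⟩

lemma aux_sq_sum :
    ∑ d : ZMod p, Fintype.card {t : ZMod p // t ^ 2 = d} = p := by
  rw [← Fintype.card_sigma]
  rw [Fintype.card_congr (Equiv.sigmaFiberEquiv (fun t : ZMod p => t ^ 2))]
  exact ZMod.card p

end Aux

/-- Solution count for the Heisenberg matrix sum problem (`k = 2`), as `w` varies: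
with `y₁, y₂, y₁+y₂ ≠ 0` fixed, exactly `(p-1)/2` values of `w` give no solutions,
exactly one value gives one solution, and exactly `(p-1)/2` values give two solutions. -/
theorem stmt_15 {p : ℕ} [Fact p.Prime] (hodd : p ≠ 2)
    (s : ZMod p) (hs : (-2 : ZMod p) * s = 1)
    (x₁ x₂ y₁ y₂ v : ZMod p)
    (hy₁ : y₁ ≠ 0) (hy₂ : y₂ ≠ 0) (hy₁₂ : y₁ + y₂ ≠ 0) :
    let η : ZMod p → ℕ := fun w =>
      Fintype.card {b : ZMod p × ZMod p //
        b.1 * x₁ + s * b.1 * (1 - b.1) * y₁ + b.2 * x₂ + s * b.2 * (1 - b.2) * y₂ = w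
        ∧ b.1 * y₁ + b.2 * y₂ = v}
    (Finset.univ.filter fun w : ZMod p => η w = 0).card = (p - 1) / 2
    ∧ (Finset.univ.filter fun w : ZMod p => η w = 1).card = 1
    ∧ (Finset.univ.filter fun w : ZMod p => η w = 2).card = (p - 1) / 2 := by
  intro η
  -- basic nonvanishing facts
  have h2 : (2 : ZMod p) ≠ 0 := by
    intro h
    rw [show (-2 : ZMod p) = -(2 : ZMod p) by norm_num, h] at hs
    simp at hs
  have hs0 : s ≠ 0 := by
    intro h; rw [h, mul_zero] at hs; exact zero_ne_one hs
  obtain ⟨A, hA_def⟩ : ∃ A : ZMod p, A = -s * y₁ * (y₁ + y₂) := ⟨_, rfl⟩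
  obtain ⟨B, hB_def⟩ : ∃ B : ZMod p, B = x₁ * y₂ - y₁ * x₂ + 2 * s * v * y₁ := ⟨_, rfl⟩
  obtain ⟨C, hC_def⟩ : ∃ C : ZMod p, C = v * x₂ + s * v * y₂ - s * v * v := ⟨_, rfl⟩
  have hA : A ≠ 0 := by
    rw [hA_def]
    exact mul_ne_zero (mul_ne_zero (neg_ne_zero.mpr hs0) hy₁) hy₁₂
  have h4 : (4 : ZMod p) ≠ 0 := by
    have h42 : (4 : ZMod p) = 2 * 2 := by norm_num
    rw [h42]; exact mul_ne_zero h2 h2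
  have h4A : (4 : ZMod p) * A ≠ 0 := mul_ne_zero h4 hA
  have h2A : (2 : ZMod p) * A ≠ 0 := mul_ne_zero h2 hA
  obtain ⟨g, hg_def⟩ : ∃ g : ZMod p → ZMod p,
      g = fun w => 4 * A * (w * y₂ - C) + B * B := ⟨_, rfl⟩
  have hginj : Function.Injective g := by
    intro w1 w2 h
    rw [hg_def] at h
    have h' : 4 * A * y₂ * (w1 - w2) = 0 := by linear_combination h
    rcases mul_eq_zero.mp h' with h'' | h''
    · exact absurd h'' (mul_ne_zero h4A hy₂)
    · exact sub_eq_zero.mp h''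
  have hgbij : Function.Bijective g := (Finite.injective_iff_bijective).mp hginj
  -- the main counting equivalence
  have hη : ∀ w, η w = Fintype.card {t : ZMod p // t ^ 2 = g w} := by
    intro w
    apply Fintype.card_congr
    refine
      { toFun := fun b => ⟨2 * A * b.1.1 + B, ?_⟩
        invFun := fun t => ⟨((t.1 - B) / (2 * A), (v - ((t.1 - B) / (2 * A)) * y₁) / y₂), ?_, ?_⟩
        left_inv := ?_
        right_inv := ?_ }
    · obtain ⟨⟨b₁, b₂⟩, e1, e2⟩ := b
      simp only at e1 e2 ⊢
      rw [hg_def]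
      simp only [hA_def, hB_def, hC_def]
      linear_combination (4 * (-s * y₁ * (y₁ + y₂)) * y₂) * e1 -
        (4 * (-s * y₁ * (y₁ + y₂)) *
          (x₂ + s * y₂ + s * (b₁ * y₁ - b₂ * y₂ - v))) * e2
    -- invFun satisfies the quadratic equation
    · obtain ⟨t, ht⟩ := t
      simp only
      set b₁ : ZMod p := (t - B) / (2 * A) with hb₁
      set b₂ : ZMod p := (v - b₁ * y₁) / y₂ with hb₂
      have h1 : 2 * A * b₁ + B = t := by
        rw [hb₁]; field_simp; ring
      have e2 : b₁ * y₁ + b₂ * y₂ = v := by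
        rw [hb₂, div_mul_cancel₀ _ hy₂]; ring
      have hq : A * b₁ ^ 2 + B * b₁ + C = w * y₂ := by
        apply mul_left_cancel₀ h4A
        rw [hg_def] at ht
        linear_combination ht + (2 * A * b₁ + B + t) * h1
      apply mul_left_cancel₀ hy₂
      simp only [hA_def, hB_def, hC_def] at hq
      linear_combination hq + (x₂ + s * y₂ + s * (b₁ * y₁ - b₂ * y₂ - v)) * e2
    -- invFun satisfies the linear equation
    · obtain ⟨t, ht⟩ := t
      simp only
      rw [div_mul_cancel₀ _ hy₂]; ring
    · rintro ⟨⟨b₁, b₂⟩, e1, e2⟩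
      apply Subtype.ext
      simp only at e2 ⊢
      have hb : (2 * A * b₁ + B - B) / (2 * A) = b₁ := by field_simp; ring
      rw [Prod.ext_iff]
      constructor
      · exact hb
      · simp only [hb]
        rw [div_eq_iff hy₂]
        linear_combination -e2
    · rintro ⟨t, ht⟩
      apply Subtype.ext
      simp only
      field_simp; ring
  -- the unique w with g w = 0
  obtain ⟨w0, hw0_def⟩ : ∃ w0 : ZMod p,
      w0 = (4 * A * C - B * B) / (4 * A * y₂) := ⟨_, rfl⟩
  have hg0 : ∀ w, g w = 0 ↔ w = w0 := by
    intro w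
    constructor
    · intro h
      rw [hg_def] at h
      rw [hw0_def, eq_div_iff (mul_ne_zero h4A hy₂)]
      linear_combination h
    · rintro rfl
      rw [hg_def, hw0_def]
      have h44 : 4 * A * y₂ ≠ 0 := mul_ne_zero h4A hy₂
      field_simp
      ring
  -- trichotomy for η
  have htri : ∀ w, η w = 0 ∨ η w = 1 ∨ η w = 2 := by
    intro w
    rw [hη w]
    by_cases h : g w = 0
    · rw [h]; right; left; exact aux_sq_card_zero
    · rcases aux_sq_card_ne h2 h with h' | h'
      · left; exact h'
      · right; right; exact h'
  have hη1 : ∀ w, η w = 1 ↔ w = w0 := by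
    intro w
    constructor
    · intro h
      by_contra hne
      have hgw : g w ≠ 0 := fun hc => hne ((hg0 w).mp hc)
      rcases aux_sq_card_ne h2 hgw with h' | h' <;> rw [hη w] at h <;> omega
    · intro h
      rw [h, hη w0, (hg0 w0).mpr rfl]
      exact aux_sq_card_zero
  -- the middle count
  have hcard1 : (Finset.univ.filter fun w : ZMod p => η w = 1).card = 1 := by
    have hone : (Finset.univ.filter fun w : ZMod p => η w = 1) = {w0} := by
      ext w; simp [hη1 w]
    rw [hone, Finset.card_singleton]
  -- total sum of η
  have hsum : ∑ w : ZMod p, η w = p := by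
    calc ∑ w : ZMod p, η w
        = ∑ w : ZMod p, Fintype.card {t : ZMod p // t ^ 2 = g w} :=
          Finset.sum_congr rfl fun w _ => hη w
      _ = ∑ d : ZMod p, Fintype.card {t : ZMod p // t ^ 2 = d} :=
          Finset.sum_bijective g hgbij (by simp) (fun w _ => rfl)
      _ = p := aux_sq_sum
  -- convert cards to sums
  have hcf : ∀ n : ℕ, (Finset.univ.filter fun w : ZMod p => η w = n).card
      = ∑ w : ZMod p, if η w = n then 1 else 0 := by
    intro n; rw [Finset.card_filter]
  have hp_card : Fintype.card (ZMod p) = p := ZMod.card p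
  have htot : (Finset.univ.filter fun w : ZMod p => η w = 0).card
      + (Finset.univ.filter fun w : ZMod p => η w = 1).card
      + (Finset.univ.filter fun w : ZMod p => η w = 2).card = p := by
    rw [hcf 0, hcf 1, hcf 2, ← Finset.sum_add_distrib, ← Finset.sum_add_distrib]
    calc (∑ w : ZMod p, ((if η w = 0 then 1 else 0) + (if η w = 1 then 1 else 0)
            + (if η w = 2 then 1 else 0)))
        = ∑ _w : ZMod p, 1 := by
          apply Finset.sum_congr rfl
          intro w _
          rcases htri w with h | h | h <;> rw [h] <;> norm_num
      _ = p := by rw [Finset.sum_const, smul_eq_mul, mul_one, Finset.card_univ, hp_card]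
  have hwsum : (Finset.univ.filter fun w : ZMod p => η w = 1).card
      + 2 * (Finset.univ.filter fun w : ZMod p => η w = 2).card = p := by
    rw [hcf 1, hcf 2, Finset.mul_sum, ← Finset.sum_add_distrib]
    calc (∑ w : ZMod p, ((if η w = 1 then 1 else 0) + 2 * if η w = 2 then 1 else 0))
        = ∑ w : ZMod p, η w := by
          apply Finset.sum_congr rfl
          intro w _
          rcases htri w with h | h | h <;> rw [h] <;> norm_num
      _ = p := hsum
  refine ⟨?_, hcard1, ?_⟩ <;> omega
end
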